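/- Let |ψ'⟩ = Σ_{z ∈ S} |ψ'_z⟩ ⊗ |z⟩ be a unit vector in H ⊗ (C²)^{⊗n} with support (in the second register, computational basis) contained in S ⊆ F₂^n. Let p(x) = (1/2^n)‖Σ_z (−1)^{x·z} |ψ'_z⟩‖² be the distribution obtained by measuring the second register in the Hadamard basis. Then the collision probability satisfies Σ_x p(x)² ≤ |S|/2^n. -/

import Mathlib

/-!
Write `p x = 2⁻ⁿ ‖∑ z, (-1) ^ (x ⬝ᵥ z) • ψ z‖²`. The Walsh characters `x ↦ (-1) ^ (x ⬝ᵥ z)` are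
orthogonal, so Parseval gives `∑ x, p x = 1`; the triangle and Cauchy–Schwarz inequalities over
the support `S` give `p x ≤ #S / 2ⁿ` for every `x`. Hence `∑ x, p x ^ 2 ≤ (max p) · ∑ x, p x ≤ #S / 2ⁿ`.
-/

open Finset Matrix ComplexConjugate

section Parseval

variable {𝕜 X Z E : Type*} [RCLike 𝕜] [Fintype X] [Fintype Z]
  [NormedAddCommGroup E] [InnerProductSpace 𝕜 E]

theorem inner_sum_smul_sum_smul (c d : Z → 𝕜) (ψ : Z → E) :
    inner 𝕜 (∑ z, c z • ψ z) (∑ w, d w • ψ w)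
      = ∑ z, ∑ w, conj (c z) * d w * inner 𝕜 (ψ z) (ψ w) := by
  simp_rw [sum_inner, inner_smul_left, inner_sum, inner_smul_right, mul_sum, mul_assoc]

theorem sum_norm_sum_smul_sq_of_orthogonal [DecidableEq Z] (c : X → Z → 𝕜) (N : ℝ)
    (hc : ∀ z w, ∑ x, conj (c x z) * c x w = if z = w then (N : 𝕜) else 0) (ψ : Z → E) :
    ∑ x, ‖∑ z, c x z • ψ z‖ ^ 2 = N * ∑ z, ‖ψ z‖ ^ 2 := by
  apply (RCLike.ofReal_injective (K := 𝕜))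
  calc ((∑ x, ‖∑ z, c x z • ψ z‖ ^ 2 : ℝ) : 𝕜)
      = ∑ x, inner 𝕜 (∑ z, c x z • ψ z) (∑ w, c x w • ψ w) := by
        push_cast
        simp only [inner_self_eq_norm_sq_to_K]
    _ = ∑ z, ∑ w, (∑ x, conj (c x z) * c x w) * inner 𝕜 (ψ z) (ψ w) := by
        simp only [inner_sum_smul_sum_smul, sum_mul]
        rw [sum_comm]
        exact sum_congr rfl fun z _ => sum_comm
    _ = ((N * ∑ z, ‖ψ z‖ ^ 2 : ℝ) : 𝕜) := by
        simp only [hc, ite_mul, zero_mul, sum_ite_eq, mem_univ, if_true,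
          inner_self_eq_norm_sq_to_K]
        push_cast
        rw [mul_sum]

end Parseval

namespace AddChar

theorem map_sum_eq_prod {A M ι : Type*} [AddCommMonoid A] [CommMonoid M] (ψ : AddChar A M)
    (s : Finset ι) (f : ι → A) : ψ (∑ i ∈ s, f i) = ∏ i ∈ s, ψ (f i) := by
  classical
  induction s using Finset.induction_on with
  | empty => simp
  | insert a s ha ih => rw [sum_insert ha, map_add_eq_mul, ih, prod_insert ha]

variable {R ι : Type*} [CommRing R] [Fintype R] [DecidableEq R] [Fintype ι] [DecidableEq ι]
  {ψ : AddChar R ℂ}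

theorem sum_apply_dotProduct (hψ : ψ.IsPrimitive) (v : ι → R) :
    ∑ x : ι → R, ψ (x ⬝ᵥ v) = if v = 0 then (Fintype.card R : ℂ) ^ Fintype.card ι else 0 := by
  calc ∑ x : ι → R, ψ (x ⬝ᵥ v)
      = ∏ i, ∑ a, ψ (a * v i) := by
        rw [Fintype.prod_sum]
        exact sum_congr rfl fun x _ => map_sum_eq_prod ψ _ _
    _ = ∏ i, if v i = 0 then (Fintype.card R : ℂ) else 0 := by
        simp only [sum_mulShift _ hψ, Nat.cast_ite, Nat.cast_zero]
    _ = _ := by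
        simp [Fintype.prod_ite_zero, funext_iff]

theorem sum_conj_mul_dotProduct (hψ : ψ.IsPrimitive) (z w : ι → R) :
    ∑ x : ι → R, conj (ψ (x ⬝ᵥ z)) * ψ (x ⬝ᵥ w)
      = if z = w then (Fintype.card R : ℂ) ^ Fintype.card ι else 0 := by
  simp only [← map_neg_eq_conj, ← map_add_eq_mul, neg_add_eq_sub, ← dotProduct_sub,
    sum_apply_dotProduct hψ, sub_eq_zero, eq_comm]

end AddChar

noncomputable def signChar : AddChar (ZMod 2) ℂ :=
  AddChar.zmodChar 2 (by norm_num : (-1 : ℂ) ^ 2 = 1)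

theorem signChar_apply (a : ZMod 2) : signChar a = (-1) ^ a.val :=
  AddChar.zmodChar_apply _ a

theorem signChar_isPrimitive : signChar.IsPrimitive :=
  AddChar.zmodChar_primitive_of_primitive_root 2 (IsPrimitiveRoot.neg_one 0 (by norm_num))

theorem norm_sum_smul_sq_le_card_mul {𝕜 Z E : Type*} [NormedField 𝕜] [Fintype Z]
    [SeminormedAddCommGroup E] [NormedSpace 𝕜 E] (S : Finset Z) (ψ : Z → E)
    (hψ : ∀ z ∉ S, ψ z = 0) (c : Z → 𝕜) (hc : ∀ z, ‖c z‖ ≤ 1) :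
    ‖∑ z, c z • ψ z‖ ^ 2 ≤ #S * ∑ z, ‖ψ z‖ ^ 2 := by
  have hrestrict : ∑ z, c z • ψ z = ∑ z ∈ S, c z • ψ z :=
    (sum_subset (subset_univ S) fun z _ hz => by rw [hψ z hz, smul_zero]).symm
  have hnorm : ‖∑ z ∈ S, c z • ψ z‖ ≤ ∑ z ∈ S, ‖ψ z‖ :=
    norm_sum_le_of_le S fun z _ =>
      (norm_smul_le _ _).trans (mul_le_of_le_one_left (norm_nonneg _) (hc z))
  calc ‖∑ z, c z • ψ z‖ ^ 2
      ≤ (∑ z ∈ S, ‖ψ z‖) ^ 2 := by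
        rw [hrestrict]
        exact pow_le_pow_left₀ (norm_nonneg _) hnorm 2
    _ ≤ #S * ∑ z ∈ S, ‖ψ z‖ ^ 2 := sq_sum_le_card_mul_sum_sq
    _ ≤ #S * ∑ z, ‖ψ z‖ ^ 2 := by
        gcongr
        exact subset_univ S

theorem Finset.sum_sq_le_mul_sum_of_le {ι R : Type*} [CommSemiring R] [PartialOrder R]
    [IsOrderedRing R] (s : Finset ι) {p : ι → R} {M : R} (hp : ∀ i ∈ s, 0 ≤ p i)
    (hM : ∀ i ∈ s, p i ≤ M) : ∑ i ∈ s, p i ^ 2 ≤ M * ∑ i ∈ s, p i := by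
  rw [mul_sum]
  exact sum_le_sum fun i hi => by
    rw [sq]
    exact mul_le_mul_of_nonneg_right (hM i hi) (hp i hi)

/-- collision-probability bound for the Hadamard-basis measurement distribution
of a state supported (in the computational basis) on `S`. -/
theorem stmt7 {n : ℕ} {E : Type*} [NormedAddCommGroup E] [InnerProductSpace ℂ E]
    (S : Finset (Fin n → ZMod 2)) (ψ : (Fin n → ZMod 2) → E)
    (hsupp : ∀ z ∉ S, ψ z = 0)
    (hunit : ∑ z : Fin n → ZMod 2, ‖ψ z‖ ^ 2 = 1) :
    ∑ x : Fin n → ZMod 2,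
        ((1 / 2 ^ n : ℝ) *
          ‖∑ z : Fin n → ZMod 2,
              ((-1 : ℂ) ^ (∑ i, x i * z i : ZMod 2).val) • ψ z‖ ^ 2) ^ 2
      ≤ (S.card : ℝ) / 2 ^ n := by
  have hsign : ∀ x z : Fin n → ZMod 2,
      (-1 : ℂ) ^ (∑ i, x i * z i : ZMod 2).val = signChar (x ⬝ᵥ z) :=
    fun x z => (signChar_apply _).symm
  simp only [hsign]
  have hparseval := sum_norm_sum_smul_sq_of_orthogonal (fun x z => signChar (x ⬝ᵥ z)) (2 ^ n)
    (fun z w => by simpa using AddChar.sum_conj_mul_dotProduct signChar_isPrimitive z w) ψ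
  have hbound : ∀ x : Fin n → ZMod 2, ‖∑ z, signChar (x ⬝ᵥ z) • ψ z‖ ^ 2 ≤ #S := fun x => by
    simpa [hunit] using norm_sum_smul_sq_le_card_mul S ψ hsupp _
      fun z => (AddChar.norm_apply signChar _).le
  calc _ ≤ (#S / 2 ^ n : ℝ) * ∑ x, 1 / 2 ^ n * ‖∑ z, signChar (x ⬝ᵥ z) • ψ z‖ ^ 2 :=
        sum_sq_le_mul_sum_of_le _ (fun x _ => by positivity) fun x _ => by
          rw [one_div_mul_eq_div]
          gcongr
          exact hbound x
    _ = #S / 2 ^ n := by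
        rw [← mul_sum, hparseval, hunit]
        field_simp
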